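/- The number 2·5·7 = 70 is the only weird number of the form 2·p·q with p < q odd primes. -/

import Mathlib

/-!
The divisor sum is multiplicative, so `σ(2pq) = 3(p+1)(q+1)` and `2pq` is abundant exactly when
`(p-3)(q-3) < 12`. For odd primes `p < q` with `p ≥ 5` this leaves only `p = 5`, `q = 7`, while
`p = 3` is excluded because every multiple of the pseudoperfect number `6` is pseudoperfect.
Finally `70` is weird by a finite check of the subsets of its proper divisors.
-/

/-- Sum of the positive divisors of `n`. -/
def sigma' (n : ℕ) : ℕ := ∑ d ∈ n.divisors, d

/-- `n` is abundant if `σ(n) > 2n`. -/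
def Abundant (n : ℕ) : Prop := 2 * n < sigma' n

/-- `n` is pseudoperfect (in the weak sense) if some subset of its proper divisors sums to `n`. -/
def Pseudoperfect (n : ℕ) : Prop := ∃ s ⊆ n.properDivisors, ∑ d ∈ s, d = n

/-- `n` is weird if it is abundant and no subset of its proper divisors sums to `n`. -/
def Weird (n : ℕ) : Prop := Abundant n ∧ ¬ Pseudoperfect n

open Finset

lemma sigma'_eq_sigma_one (n : ℕ) : sigma' n = ArithmeticFunction.sigma 1 n := by
  simp [sigma', ArithmeticFunction.sigma_one_apply]

lemma sigma'_mul {m n : ℕ} (h : m.Coprime n) : sigma' (m * n) = sigma' m * sigma' n := by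
  simp only [sigma'_eq_sigma_one]
  exact ArithmeticFunction.isMultiplicative_sigma.map_mul_of_coprime h

lemma sigma'_prime {p : ℕ} (hp : p.Prime) : sigma' p = p + 1 := by
  rw [sigma', hp.divisors, sum_pair hp.one_lt.ne]
  omega

lemma sigma'_two_mul_mul {p q : ℕ} (hp : p.Prime) (hq : q.Prime) (hp2 : p ≠ 2) (hq2 : q ≠ 2)
    (hpq : p ≠ q) : sigma' (2 * p * q) = 3 * (p + 1) * (q + 1) := by
  have h2p : Nat.Coprime 2 p := (Nat.coprime_primes Nat.prime_two hp).mpr hp2.symm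
  have h2q : Nat.Coprime 2 q := (Nat.coprime_primes Nat.prime_two hq).mpr hq2.symm
  have hpq' : Nat.Coprime p q := (Nat.coprime_primes hp hq).mpr hpq
  rw [sigma'_mul (Nat.Coprime.mul_left h2q hpq'), sigma'_mul h2p, sigma'_prime Nat.prime_two,
    sigma'_prime hp, sigma'_prime hq]

lemma abundant_two_mul_mul_iff {p q : ℕ} (hp : p.Prime) (hq : q.Prime) (hp2 : p ≠ 2)
    (hq2 : q ≠ 2) (hpq : p ≠ q) : Abundant (2 * p * q) ↔ p * q < 3 * p + 3 * q + 3 := by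
  rw [Abundant, sigma'_two_mul_mul hp hq hp2 hq2 hpq]
  constructor <;> intro h <;> nlinarith

lemma pseudoperfect_iff_exists_mem_powerset (n : ℕ) :
    Pseudoperfect n ↔ ∃ s ∈ n.properDivisors.powerset, ∑ d ∈ s, d = n := by
  simp [Pseudoperfect, mem_powerset]

lemma Pseudoperfect.mul_right {n : ℕ} (h : Pseudoperfect n) (m : ℕ) : Pseudoperfect (n * m) := by
  rcases Nat.eq_zero_or_pos m with rfl | hm
  · exact ⟨∅, empty_subset _, by simp⟩
  obtain ⟨s, hs, hsum⟩ := h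
  refine ⟨s.image (· * m), ?_, ?_⟩
  · intro e he
    obtain ⟨d, hd, rfl⟩ := mem_image.mp he
    obtain ⟨hdn, hlt⟩ := Nat.mem_properDivisors.mp (hs hd)
    exact Nat.mem_properDivisors.mpr
      ⟨Nat.mul_dvd_mul_right hdn m, Nat.mul_lt_mul_of_pos_right hlt hm⟩
  · rw [sum_image fun a _ b _ hab => Nat.eq_of_mul_eq_mul_right hm hab, ← sum_mul, hsum]

lemma pseudoperfect_six : Pseudoperfect 6 := by
  rw [pseudoperfect_iff_exists_mem_powerset]
  decide

lemma weird_seventy : Weird 70 := by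
  refine ⟨by unfold Abundant; decide, ?_⟩
  rw [pseudoperfect_iff_exists_mem_powerset]
  set_option maxRecDepth 10000 in decide

lemma eq_five_and_eq_seven_of_mul_lt {p q : ℕ} (hp : 5 ≤ p) (hpq : p < q) (hop : Odd p)
    (hoq : Odd q) (h : p * q < 3 * p + 3 * q + 3) : p = 5 ∧ q = 7 := by
  obtain ⟨k, rfl⟩ := hop
  obtain ⟨l, rfl⟩ := hoq
  have hk : k = 2 := by
    by_contra hk
    have : 3 ≤ k := by omega
    have : k + 1 ≤ l := by omega
    nlinarith
  subst hk
  omega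

theorem weird_2pq_unique :
    Weird (2 * 5 * 7) ∧
      ∀ p q : ℕ, p.Prime → q.Prime → Odd p → Odd q → p < q →
        Weird (2 * p * q) → p = 5 ∧ q = 7 := by
  refine ⟨weird_seventy, fun p q hp hq hop hoq hpq ⟨habund, hnotpseudo⟩ => ?_⟩
  have hp2 : p ≠ 2 := by rintro rfl; norm_num at hop
  have hq2 : q ≠ 2 := by rintro rfl; norm_num at hoq
  have hp3 : p ≠ 3 := by
    rintro rfl
    exact hnotpseudo (pseudoperfect_six.mul_right q)
  have hp5 : 5 ≤ p := by
    have := hp.two_le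
    obtain ⟨k, rfl⟩ := hop
    omega
  exact eq_five_and_eq_seven_of_mul_lt hp5 hpq hop hoq
    ((abundant_two_mul_mul_iff hp hq hp2 hq2 hpq.ne).mp habund)
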